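/- Suppose a cyclic permutation π of {1,...,N} has a block structure whose blocks, when collapsed to points preserving order, yield a cyclic permutation τ of the blocks. If the tower of τ is (m_0, m_1, ..., m_r), then the tower of π has the form (m_0, m_1, ..., m_r, m_{r+1}, ..., m_k) for some k > r, i.e., the tower of the factor permutation is a beginning (initial segment) of the tower of π. -/
import Mathlib

/-- `π` restricted to `{1,...,N}` is a cyclic permutation of `{1,...,N}`. -/
def IsCyclicOn (π : ℕ → ℕ) (N : ℕ) : Prop :=
  Set.BijOn π (Set.Icc 1 N) (Set.Icc 1 N) ∧
  ∃ x ∈ Finset.Icc 1 N, ∀ y ∈ Finset.Icc 1 N, ∃ m, π^[m] x = y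

/-- `π` has a block structure of period `d` on `{1,...,N}`. -/
def HasBlockStructure (π : ℕ → ℕ) (N d : ℕ) : Prop :=
  1 < d ∧ d < N ∧ ∃ B : ℕ → Fin d,
    MonotoneOn B (Set.Icc 1 N) ∧
    (∀ j : Fin d, ∃ i ∈ Finset.Icc 1 N, B i = j) ∧
    ∃ τ : Equiv.Perm (Fin d), ∀ i ∈ Finset.Icc 1 N, B (π i) = τ (B i)

/-- Block structure of period `d` for a permutation of `Fin k`. -/
def HasBlockStructureFin {k : ℕ} (τ : Equiv.Perm (Fin k)) (d : ℕ) : Prop :=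
  1 < d ∧ d < k ∧ ∃ C : Fin k → Fin d,
    Monotone C ∧ Function.Surjective C ∧
    ∃ ρ : Equiv.Perm (Fin d), ∀ i, C (τ i) = ρ (C i)

namespace FactorTowerAux

variable {π : ℕ → ℕ} {N : ℕ}

lemma iterate_mem (hmaps : Set.MapsTo π (Set.Icc 1 N) (Set.Icc 1 N))
    {x : ℕ} (hx : x ∈ Set.Icc 1 N) : ∀ m, π^[m] x ∈ Set.Icc 1 N := by
  intro m
  induction m with
  | zero => exact hx
  | succ n ih => rw [Function.iterate_succ_apply']; exact hmaps ih

lemma cancel (hinj : Set.InjOn π (Set.Icc 1 N))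
    (hmaps : Set.MapsTo π (Set.Icc 1 N) (Set.Icc 1 N))
    {x : ℕ} (hx : x ∈ Set.Icc 1 N) (t : ℕ) :
    ∀ a, π^[a] x = π^[a + t] x → x = π^[t] x := by
  intro a
  induction a with
  | zero => intro h; simpa using h
  | succ n ih =>
    intro h
    apply ih
    apply hinj (iterate_mem hmaps hx n) (iterate_mem hmaps hx (n + t))
    have h1 : π (π^[n] x) = π^[n + 1] x := (Function.iterate_succ_apply' π n x).symm
    have h2 : π (π^[n + t] x) = π^[n + t + 1] x := (Function.iterate_succ_apply' π (n + t) x).symm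
    rw [h1, h2]
    have h3 : n + t + 1 = n + 1 + t := by omega
    rw [h3]
    exact h

lemma exists_period (hinj : Set.InjOn π (Set.Icc 1 N))
    (hmaps : Set.MapsTo π (Set.Icc 1 N) (Set.Icc 1 N))
    {x : ℕ} (hx : x ∈ Set.Icc 1 N) : ∃ t, 0 < t ∧ π^[t] x = x := by
  obtain ⟨a, ha, b, hb, hab, heq⟩ :
      ∃ a ∈ Finset.range (N + 1), ∃ b ∈ Finset.range (N + 1), a ≠ b ∧ π^[a] x = π^[b] x := by
    apply Finset.exists_ne_map_eq_of_card_lt_of_maps_to (t := Finset.Icc 1 N)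
    · simp [Nat.card_Icc]
    · intro m _
      simpa [Finset.mem_Icc, Set.mem_Icc] using iterate_mem hmaps hx m
  rcases Nat.lt_or_ge a b with h | h
  · exact ⟨b - a, by omega, (cancel hinj hmaps hx (b - a) a
      (by rw [show a + (b - a) = b by omega]; exact heq)).symm⟩
  · have h' : b < a := by omega
    exact ⟨a - b, by omega, (cancel hinj hmaps hx (a - b) b
      (by rw [show b + (a - b) = a by omega]; exact heq.symm)).symm⟩

/-- Iterates are equal iff exponents agree mod `N`. -/
lemma orbit_mod (hinj : Set.InjOn π (Set.Icc 1 N))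
    (hmaps : Set.MapsTo π (Set.Icc 1 N) (Set.Icc 1 N))
    {x : ℕ} (hx : x ∈ Set.Icc 1 N)
    (hgen : ∀ y ∈ Set.Icc 1 N, ∃ m, π^[m] x = y) (hN : 0 < N) :
    ∀ a b : ℕ, π^[a] x = π^[b] x ↔ a % N = b % N := by
  obtain ⟨t, ht, hxt⟩ := exists_period hinj hmaps hx
  have hper : Function.IsPeriodicPt π t x := hxt
  have hnpos : 0 < Function.minimalPeriod π x := hper.minimalPeriod_pos ht
  set n := Function.minimalPeriod π x with hn
  have hmod : ∀ m : ℕ, π^[m % n] x = π^[m] x := fun m =>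
    Function.iterate_mod_minimalPeriod_eq
  have hinjlt : Set.InjOn (fun m => π^[m] x) (Set.Iio n) :=
    Function.iterate_injOn_Iio_minimalPeriod
  have hScard : ((Finset.range n).image (fun m => π^[m] x)).card = n := by
    rw [Finset.card_image_of_injOn, Finset.card_range]
    intro a ha b hb hab
    exact hinjlt (by simpa using ha) (by simpa using hb) hab
  have hSsub : (Finset.range n).image (fun m => π^[m] x) = Finset.Icc 1 N := by
    apply Finset.Subset.antisymm
    · intro y hy
      obtain ⟨m, _, rfl⟩ := Finset.mem_image.mp hy
      simpa [Finset.mem_Icc, Set.mem_Icc] using iterate_mem hmaps hx m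
    · intro y hy
      obtain ⟨m, rfl⟩ := hgen y (by simpa [Finset.mem_Icc, Set.mem_Icc] using hy)
      exact Finset.mem_image.mpr ⟨m % n, Finset.mem_range.mpr (Nat.mod_lt _ hnpos), hmod m⟩
  have hnN : n = N := by
    have h := hScard
    rw [hSsub, Nat.card_Icc] at h
    omega
  intro a b
  constructor
  · intro h
    have h1 : π^[a % n] x = π^[b % n] x := by rw [hmod, hmod]; exact h
    have h2 := hinjlt (Set.mem_Iio.mpr (Nat.mod_lt _ hnpos))
      (Set.mem_Iio.mpr (Nat.mod_lt _ hnpos)) h1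
    rwa [hnN] at h2
  · intro h
    rw [← hmod a, ← hmod b, hnN, h]

/-- Iterating a block map. -/
lemma block_iter {p : ℕ} {B' : ℕ → Fin p} {ρ : Equiv.Perm (Fin p)}
    (hρ : ∀ i ∈ Set.Icc 1 N, B' (π i) = ρ (B' i))
    (hmaps : Set.MapsTo π (Set.Icc 1 N) (Set.Icc 1 N))
    {x : ℕ} (hx : x ∈ Set.Icc 1 N) :
    ∀ m, B' (π^[m] x) = (⇑ρ)^[m] (B' x) := by
  intro m
  induction m with
  | zero => rfl
  | succ n ih =>
    rw [Function.iterate_succ_apply', Function.iterate_succ_apply',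
      hρ _ (iterate_mem hmaps hx n), ih]

/-- Congruence characterization for a block map along the orbit. -/
lemma block_mod {p : ℕ} {B' : ℕ → Fin p} {ρ : Equiv.Perm (Fin p)}
    (hρ : ∀ i ∈ Set.Icc 1 N, B' (π i) = ρ (B' i))
    (hmaps : Set.MapsTo π (Set.Icc 1 N) (Set.Icc 1 N))
    {x : ℕ} (hx : x ∈ Set.Icc 1 N)
    (hgen : ∀ y ∈ Set.Icc 1 N, ∃ m, π^[m] x = y)
    (hsurj' : ∀ j : Fin p, ∃ i ∈ Set.Icc 1 N, B' i = j) :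
    ∀ a b : ℕ, B' (π^[a] x) = B' (π^[b] x) ↔ a % p = b % p := by
  have hppos : 0 < p := Fin.pos (B' 0)
  have hiter := block_iter hρ hmaps hx
  have hper : Function.IsPeriodicPt (⇑ρ) (orderOf ρ) (B' x) := by
    show (⇑ρ)^[orderOf ρ] (B' x) = B' x
    rw [Equiv.Perm.iterate_eq_pow, pow_orderOf_eq_one]
    rfl
  have hqpos : 0 < Function.minimalPeriod (⇑ρ) (B' x) :=
    hper.minimalPeriod_pos (orderOf_pos ρ)
  set q := Function.minimalPeriod (⇑ρ) (B' x) with hq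
  have hmodq : ∀ m : ℕ, (⇑ρ)^[m % q] (B' x) = (⇑ρ)^[m] (B' x) := fun m =>
    Function.iterate_mod_minimalPeriod_eq
  have hinjlt : Set.InjOn (fun m => (⇑ρ)^[m] (B' x)) (Set.Iio q) :=
    Function.iterate_injOn_Iio_minimalPeriod
  have hScard : ((Finset.range q).image (fun m => (⇑ρ)^[m] (B' x))).card = q := by
    rw [Finset.card_image_of_injOn, Finset.card_range]
    intro a ha b hb hab
    exact hinjlt (by simpa using ha) (by simpa using hb) hab
  have hSsub : (Finset.range q).image (fun m => (⇑ρ)^[m] (B' x)) = Finset.univ := by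
    apply Finset.eq_univ_of_forall
    intro j
    obtain ⟨i, hi, rfl⟩ := hsurj' j
    obtain ⟨m, rfl⟩ := hgen i hi
    refine Finset.mem_image.mpr ⟨m % q, Finset.mem_range.mpr (Nat.mod_lt _ hqpos), ?_⟩
    rw [hmodq m, ← hiter m]
  have hqp : q = p := by
    have h := hScard
    rw [hSsub, Finset.card_univ, Fintype.card_fin] at h
    omega
  intro a b
  rw [hiter a, hiter b]
  constructor
  · intro h
    have h1 : (⇑ρ)^[a % q] (B' x) = (⇑ρ)^[b % q] (B' x) := by rw [hmodq, hmodq]; exact h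
    have h2 := hinjlt (Set.mem_Iio.mpr (Nat.mod_lt _ hqpos))
      (Set.mem_Iio.mpr (Nat.mod_lt _ hqpos)) h1
    rwa [hqp] at h2
  · intro h
    rw [← hmodq a, ← hmodq b, hqp, h]

lemma count_mod {p c : ℕ} (hp : 0 < p) (hpN : p ∣ N) :
    ((Finset.range N).filter (fun m => m % p = c % p)).card = N / p := by
  have himg : (Finset.range N).filter (fun m => m % p = c % p)
      = (Finset.range (N / p)).image (fun q => q * p + c % p) := by
    ext m
    simp only [Finset.mem_filter, Finset.mem_range, Finset.mem_image]
    constructor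
    · rintro ⟨hm, hmod⟩
      refine ⟨m / p, ?_, ?_⟩
      · exact Nat.div_lt_div_of_lt_of_dvd hpN hm
      · rw [← hmod]; exact Nat.div_add_mod' m p
    · rintro ⟨q, hq, rfl⟩
      constructor
      · have h1 : q * p + c % p < (q + 1) * p := by
          have := Nat.mod_lt c hp
          nlinarith
        have h2 : (q + 1) * p ≤ (N / p) * p := by
          apply Nat.mul_le_mul_right
          omega
        have h3 : (N / p) * p = N := Nat.div_mul_cancel hpN
        omega
      · rw [Nat.mul_comm, Nat.mul_add_mod]
        exact Nat.mod_mod_of_dvd _ (dvd_refl p)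
  rw [himg, Finset.card_image_of_injective, Finset.card_range]
  intro a b hab
  simp only at hab
  exact Nat.eq_of_mul_eq_mul_right hp (show a * p = b * p by omega)

lemma card_fiber {p c : ℕ} {x : ℕ} (hp : 0 < p) (hpN : p ∣ N) (hN : 0 < N)
    (hmem : ∀ m, π^[m] x ∈ Set.Icc 1 N)
    (hgen : ∀ y ∈ Set.Icc 1 N, ∃ m, π^[m] x = y)
    (hmodN : ∀ a b : ℕ, π^[a] x = π^[b] x ↔ a % N = b % N)
    (Q : ℕ → Prop) [DecidablePred Q]
    (hQ : ∀ m, Q (π^[m] x) ↔ m % p = c % p) :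
    ((Finset.Icc 1 N).filter (fun i => Q i)).card = N / p := by
  rw [← count_mod hp hpN (c := c)]
  symm
  apply Finset.card_bij (fun m _ => π^[m] x)
  · intro m hm
    simp only [Finset.mem_filter, Finset.mem_range] at hm
    simp only [Finset.mem_filter, Finset.mem_Icc]
    have h1 := hmem m
    rw [Set.mem_Icc] at h1
    exact ⟨h1, (hQ m).mpr hm.2⟩
  · intro a ha b hb hab
    simp only [Finset.mem_filter, Finset.mem_range] at ha hb
    have h := (hmodN a b).mp hab
    rwa [Nat.mod_eq_of_lt ha.1, Nat.mod_eq_of_lt hb.1] at h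
  · intro i hi
    simp only [Finset.mem_filter, Finset.mem_Icc] at hi
    obtain ⟨m, hm⟩ := hgen i (Set.mem_Icc.mpr hi.1)
    have heq : π^[m % N] x = i := by
      rw [← hm]
      exact (hmodN (m % N) m).mpr (Nat.mod_mod_of_dvd m (dvd_refl N))
    refine ⟨m % N, ?_, heq⟩
    simp only [Finset.mem_filter, Finset.mem_range]
    refine ⟨Nat.mod_lt _ hN, ?_⟩
    apply (hQ (m % N)).mp
    rw [heq]
    exact hi.2

lemma mod_lcm_iff {k d m c : ℕ} :
    (m % k = c % k ∧ m % d = c % d) ↔ m % Nat.lcm k d = c % Nat.lcm k d := by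
  constructor
  · rintro ⟨h1, h2⟩
    rcases le_total m c with h | h
    · have h1' : k ∣ c - m := (Nat.modEq_iff_dvd' h).mp h1
      have h2' : d ∣ c - m := (Nat.modEq_iff_dvd' h).mp h2
      exact (Nat.modEq_iff_dvd' h).mpr (Nat.lcm_dvd h1' h2')
    · have h1' : k ∣ m - c := (Nat.modEq_iff_dvd' h).mp (Nat.ModEq.symm h1)
      have h2' : d ∣ m - c := (Nat.modEq_iff_dvd' h).mp (Nat.ModEq.symm h2)
      exact Nat.ModEq.symm ((Nat.modEq_iff_dvd' h).mpr (Nat.lcm_dvd h1' h2'))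
  · intro h
    exact ⟨Nat.ModEq.of_dvd (Nat.dvd_lcm_left k d) h, Nat.ModEq.of_dvd (Nat.dvd_lcm_right k d) h⟩

lemma fibers_nested {k d : ℕ} {B : ℕ → Fin k} {B' : ℕ → Fin d}
    (hN : 0 < N) (hmono : MonotoneOn B (Set.Icc 1 N)) (hmono' : MonotoneOn B' (Set.Icc 1 N)) :
    (∀ i ∈ Set.Icc 1 N, B i = B 1 → B' i = B' 1) ∨
    (∀ i ∈ Set.Icc 1 N, B' i = B' 1 → B i = B 1) := by
  have h1 : (1 : ℕ) ∈ Set.Icc 1 N := ⟨le_refl 1, hN⟩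
  by_contra hcon
  push_neg at hcon
  obtain ⟨⟨i, hi, hBi, hB'i⟩, ⟨i', hi', hB'i', hBi'⟩⟩ := hcon
  have down : ∀ (p : ℕ) (E : ℕ → Fin p), MonotoneOn E (Set.Icc 1 N) →
      ∀ a ∈ Set.Icc 1 N, ∀ b ∈ Set.Icc 1 N, b ≤ a → E a = E 1 → E b = E 1 := by
    intro p E hE a ha b hb hba hEa
    have l1 : E 1 ≤ E b := hE h1 hb hb.1
    have l2 : E b ≤ E a := hE hb ha hba
    rw [hEa] at l2
    exact le_antisymm l2 l1
  rcases le_total i i' with h | h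
  · exact hB'i (down d B' hmono' i' hi' i hi h hB'i')
  · exact hBi' (down k B hmono i hi i' hi' h hBi)

lemma div_eq_cancel {a b : ℕ} (hN : 0 < N) (ha : a ∣ N) (hb : b ∣ N)
    (h : N / a = N / b) : a = b := by
  have hb0 : 0 < b := by
    rcases Nat.eq_zero_or_pos b with rfl | hb0
    · exact absurd (Nat.eq_zero_of_zero_dvd hb) (by omega)
    · exact hb0
  have h1 : a * (N / a) = N := Nat.mul_div_cancel' ha
  have h2 : b * (N / b) = N := Nat.mul_div_cancel' hb
  have hpos : 0 < N / b := Nat.div_pos (Nat.le_of_dvd hN hb) hb0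
  rw [h] at h1
  exact Nat.eq_of_mul_eq_mul_right hpos (by omega)

end FactorTowerAux

/-- If `π` has a block structure with `k` blocks and factor permutation `τ` (the
blocks collapsed to points in order), then the renormalization tower of `τ` is a
beginning of the tower of `π`: the block-structure periods of `π` not exceeding
`k` are exactly the block-structure periods of `τ` together with `k` itself. -/
theorem factor_tower_is_beginning
    (π : ℕ → ℕ) (N : ℕ) (hcyc : IsCyclicOn π N)
    (k : ℕ) (hk1 : 1 < k) (hk2 : k < N)
    (B : ℕ → Fin k) (hmono : MonotoneOn B (Set.Icc 1 N))
    (hsurj : ∀ j : Fin k, ∃ i ∈ Finset.Icc 1 N, B i = j)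
    (τ : Equiv.Perm (Fin k)) (hτ : ∀ i ∈ Finset.Icc 1 N, B (π i) = τ (B i)) :
    ∀ d, 1 < d → d ≤ k →
      (HasBlockStructure π N d ↔ (HasBlockStructureFin τ d ∨ d = k)) := by
  intro d hd1 hdk
  obtain ⟨hbij, x, hxF, hgenF⟩ := hcyc
  have hN : 0 < N := by omega
  have hx : x ∈ Set.Icc 1 N := by simpa [Set.mem_Icc, Finset.mem_Icc] using hxF
  have hgen : ∀ y ∈ Set.Icc 1 N, ∃ m, π^[m] x = y := fun y hy =>
    hgenF y (by simpa [Finset.mem_Icc, Set.mem_Icc] using hy)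
  have hmaps := hbij.mapsTo
  have hinj := hbij.injOn
  have hmodN := FactorTowerAux.orbit_mod hinj hmaps hx hgen hN
  have hmem := FactorTowerAux.iterate_mem hmaps hx
  have hτ' : ∀ i ∈ Set.Icc 1 N, B (π i) = τ (B i) := fun i hi =>
    hτ i (by simpa [Finset.mem_Icc, Set.mem_Icc] using hi)
  have hsurjB : ∀ j : Fin k, ∃ i ∈ Set.Icc 1 N, B i = j := fun j => by
    obtain ⟨i, hi, h⟩ := hsurj j
    exact ⟨i, by simpa [Finset.mem_Icc, Set.mem_Icc] using hi, h⟩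
  have hmodk := FactorTowerAux.block_mod hτ' hmaps hx hgen hsurjB
  have hkN : k ∣ N := by
    have h0 : π^[N] x = π^[0] x := (hmodN N 0).mpr (by simp)
    have h1 := (hmodk N 0).mp (by rw [h0])
    simp only [Nat.zero_mod] at h1
    exact Nat.dvd_of_mod_eq_zero h1
  constructor
  · intro hbs
    by_cases hdkeq : d = k
    · exact Or.inr hdkeq
    have hdklt : d < k := lt_of_le_of_ne hdk hdkeq
    left
    obtain ⟨-, -, B', hmono', hsurj'F, ρ, hρF⟩ := hbs
    have hρ' : ∀ i ∈ Set.Icc 1 N, B' (π i) = ρ (B' i) := fun i hi =>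
      hρF i (by simpa [Finset.mem_Icc, Set.mem_Icc] using hi)
    have hsurj' : ∀ j : Fin d, ∃ i ∈ Set.Icc 1 N, B' i = j := fun j => by
      obtain ⟨i, hi, h⟩ := hsurj'F j
      exact ⟨i, by simpa [Finset.mem_Icc, Set.mem_Icc] using hi, h⟩
    have hmodd := FactorTowerAux.block_mod hρ' hmaps hx hgen hsurj'
    have hdN : d ∣ N := by
      have h0 : π^[N] x = π^[0] x := (hmodN N 0).mpr (by simp)
      have h1 := (hmodd N 0).mp (by rw [h0])
      simp only [Nat.zero_mod] at h1
      exact Nat.dvd_of_mod_eq_zero h1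
    set L := Nat.lcm k d with hL
    have hLN : L ∣ N := Nat.lcm_dvd hkN hdN
    have hLpos : 0 < L := Nat.lcm_pos (by omega) (by omega)
    obtain ⟨m1, hm1⟩ := hgen 1 ⟨le_refl 1, by omega⟩
    have hQB : ∀ m, B (π^[m] x) = B 1 ↔ m % k = m1 % k := by
      intro m
      rw [show B 1 = B (π^[m1] x) by rw [hm1]]
      exact hmodk m m1
    have hQB' : ∀ m, B' (π^[m] x) = B' 1 ↔ m % d = m1 % d := by
      intro m
      rw [show B' 1 = B' (π^[m1] x) by rw [hm1]]
      exact hmodd m m1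
    have hcardB : ((Finset.Icc 1 N).filter (fun i => B i = B 1)).card = N / k :=
      FactorTowerAux.card_fiber (by omega) hkN hN hmem hgen hmodN _ hQB
    have hcardB' : ((Finset.Icc 1 N).filter (fun i => B' i = B' 1)).card = N / d :=
      FactorTowerAux.card_fiber (by omega) hdN hN hmem hgen hmodN _ hQB'
    have hcardBoth :
        ((Finset.Icc 1 N).filter (fun i => B i = B 1 ∧ B' i = B' 1)).card = N / L := by
      apply FactorTowerAux.card_fiber (c := m1) hLpos hLN hN hmem hgen hmodN
      intro m
      rw [← FactorTowerAux.mod_lcm_iff]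
      constructor
      · rintro ⟨h1, h2⟩
        exact ⟨(hQB m).mp h1, (hQB' m).mp h2⟩
      · rintro ⟨h1, h2⟩
        exact ⟨(hQB m).mpr h1, (hQB' m).mpr h2⟩
    have hdvd : d ∣ k := by
      rcases FactorTowerAux.fibers_nested hN hmono hmono' with hsub | hsub
      · have hfeq : (Finset.Icc 1 N).filter (fun i => B i = B 1 ∧ B' i = B' 1)
            = (Finset.Icc 1 N).filter (fun i => B i = B 1) := by
          apply Finset.filter_congr
          intro i hi
          simp only [Finset.mem_Icc] at hi
          constructor
          · exact fun h => h.1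
          · exact fun h => ⟨h, hsub i (Set.mem_Icc.mpr hi) h⟩
        rw [hfeq, hcardB] at hcardBoth
        have hLk : L = k := FactorTowerAux.div_eq_cancel hN hLN hkN hcardBoth.symm
        rw [← hLk]
        exact Nat.dvd_lcm_right k d
      · exfalso
        have hfeq : (Finset.Icc 1 N).filter (fun i => B i = B 1 ∧ B' i = B' 1)
            = (Finset.Icc 1 N).filter (fun i => B' i = B' 1) := by
          apply Finset.filter_congr
          intro i hi
          simp only [Finset.mem_Icc] at hi
          constructor
          · exact fun h => h.2
          · exact fun h => ⟨hsub i (Set.mem_Icc.mpr hi) h, h⟩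
        rw [hfeq, hcardB'] at hcardBoth
        have hLd : L = d := FactorTowerAux.div_eq_cancel hN hLN hdN hcardBoth.symm
        have : k ∣ d := by rw [← hLd]; exact Nat.dvd_lcm_left k d
        have := Nat.le_of_dvd (by omega) this
        omega
    -- the factoring property
    have hfact : ∀ i ∈ Set.Icc 1 N, ∀ i' ∈ Set.Icc 1 N, B i = B i' → B' i = B' i' := by
      intro i hi i' hi' hBB
      obtain ⟨m, rfl⟩ := hgen i hi
      obtain ⟨m', rfl⟩ := hgen i' hi'
      have hmm : Nat.ModEq k m m' := (hmodk m m').mp hBB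
      exact (hmodd m m').mpr (hmm.of_dvd hdvd)
    choose rep hrepF hrepspec using hsurj
    have hrepmem : ∀ j, rep j ∈ Set.Icc 1 N := fun j => by
      simpa [Finset.mem_Icc, Set.mem_Icc] using hrepF j
    have key : ∀ i ∈ Set.Icc 1 N, B' (rep (B i)) = B' i := fun i hi =>
      hfact _ (hrepmem _) i hi (hrepspec _)
    refine ⟨hd1, hdklt, fun j => B' (rep j), ?_, ?_, ρ, ?_⟩
    · intro j j' hle
      rcases le_total (rep j) (rep j') with h | h
      · exact hmono' (hrepmem j) (hrepmem j') h
      · have h2 : B (rep j') ≤ B (rep j) := hmono (hrepmem j') (hrepmem j) h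
        rw [hrepspec, hrepspec] at h2
        have h3 : j = j' := le_antisymm hle h2
        rw [h3]
    · intro j'
      obtain ⟨i, hi, hB'i⟩ := hsurj' j'
      refine ⟨B i, ?_⟩
      show B' (rep (B i)) = j'
      rw [key i hi, hB'i]
    · intro j
      have hπ : π (rep j) ∈ Set.Icc 1 N := hmaps (hrepmem j)
      show B' (rep (τ j)) = ρ (B' (rep j))
      calc B' (rep (τ j)) = B' (rep (τ (B (rep j)))) := by rw [hrepspec]
        _ = B' (rep (B (π (rep j)))) := by rw [hτ' _ (hrepmem j)]
        _ = B' (π (rep j)) := key _ hπ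
        _ = ρ (B' (rep j)) := hρ' _ (hrepmem j)
  · rintro (hfin | rfl)
    · obtain ⟨hd1', hdklt, C, hCmono, hCsurj, ρ, hρ⟩ := hfin
      refine ⟨hd1, hdklt.trans hk2, fun i => C (B i),
        fun a ha b hb hab => hCmono (hmono ha hb hab), ?_, ρ, ?_⟩
      · intro j'
        obtain ⟨j, hj⟩ := hCsurj j'
        obtain ⟨i, hi, hB⟩ := hsurj j
        exact ⟨i, hi, by show C (B i) = j'; rw [hB, hj]⟩
      · intro i hi
        show C (B (π i)) = ρ (C (B i))
        rw [hτ i hi, hρ]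
    · exact ⟨hk1, hk2, B, hmono, hsurj, τ, hτ⟩
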